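/- arXiv:1801.03592 — 2 statements merged into one kernel-verified Lean document; each statement's English description precedes it below -/
import Mathlib

section
/- Suppose the prior-preconditioned data-misfit Hessian satisfies exactly LᵀH_mis L = VΛVᵀ, where V is an n×r matrix with orthonormal columns (VᵀV = I_r) and Λ = diag(λ₁,…,λ_r) with all λ_i > -1. Then the inverse of H = H_mis + (LLᵀ)⁻¹ is given exactly by H⁻¹ = L(I - V D Vᵀ)Lᵀ, where D = diag(λ₁/(λ₁+1), …, λ_r/(λ_r+1)). -/
open Matrix

/-- Sherman–Morrison–Woodbury low-rank form: if `LᵀH_mis L = VΛVᵀ` with `VᵀV = I` and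
eigenvalues `λᵢ > -1`, then `(H_mis + (LLᵀ)⁻¹)⁻¹ = L(I - V D Vᵀ)Lᵀ` with
`D = diag(λᵢ/(λᵢ+1))`. -/
theorem lowrank_inverse {n r : ℕ} (Hmis L : Matrix (Fin n) (Fin n) ℝ)
    (V : Matrix (Fin n) (Fin r) ℝ) (lam : Fin r → ℝ)
    (hH : Hmis.IsHermitian) (hL : IsUnit L.det)
    (hV : Vᵀ * V = 1) (hlam : ∀ i, -1 < lam i)
    (hfact : Lᵀ * Hmis * L = V * Matrix.diagonal lam * Vᵀ) :
    (Hmis + (L * Lᵀ)⁻¹)⁻¹ =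
      L * (1 - V * Matrix.diagonal (fun i => lam i / (lam i + 1)) * Vᵀ) * Lᵀ := by
  have hLT : IsUnit Lᵀ.det := by rwa [Matrix.det_transpose]
  set D : Matrix (Fin r) (Fin r) ℝ := Matrix.diagonal (fun i => lam i / (lam i + 1)) with hD
  have hdiag : Matrix.diagonal lam * D + D = Matrix.diagonal lam := by
    rw [hD, Matrix.diagonal_mul_diagonal, Matrix.diagonal_add]
    have key : (fun i => lam i * (lam i / (lam i + 1)) + lam i / (lam i + 1)) = lam := by
      funext i
      have h0 : lam i + 1 ≠ 0 := by nlinarith [hlam i]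
      field_simp
    rw [key]
  have hH2 : Hmis * L = Lᵀ⁻¹ * (V * Matrix.diagonal lam * Vᵀ) := by
    rw [← hfact, ← Matrix.mul_assoc, ← Matrix.mul_assoc, Matrix.nonsing_inv_mul _ hLT,
      Matrix.one_mul]
  apply Matrix.inv_eq_right_inv
  have hinv : (L * Lᵀ)⁻¹ = Lᵀ⁻¹ * L⁻¹ := Matrix.mul_inv_rev L Lᵀ
  calc (Hmis + (L * Lᵀ)⁻¹) * (L * (1 - V * D * Vᵀ) * Lᵀ)
      = Hmis * L * ((1 - V * D * Vᵀ) * Lᵀ) + Lᵀ⁻¹ * (L⁻¹ * L) * ((1 - V * D * Vᵀ) * Lᵀ) := by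
        rw [hinv]; noncomm_ring
    _ = Lᵀ⁻¹ * ((V * Matrix.diagonal lam * Vᵀ) * (1 - V * D * Vᵀ) + (1 - V * D * Vᵀ)) * Lᵀ := by
        rw [hH2, Matrix.nonsing_inv_mul _ hL]; noncomm_ring
    _ = Lᵀ⁻¹ * (1 + V * (Matrix.diagonal lam - (Matrix.diagonal lam * D + D)) * Vᵀ) * Lᵀ := by
        congr 2
        have h1 : Vᵀ * (V * D * Vᵀ) = D * Vᵀ := by
          rw [← Matrix.mul_assoc, ← Matrix.mul_assoc, hV, Matrix.one_mul]
        rw [Matrix.mul_sub, Matrix.mul_one, Matrix.mul_assoc (V * Matrix.diagonal lam) Vᵀ, h1]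
        simp only [Matrix.mul_sub, Matrix.sub_mul, Matrix.mul_add, Matrix.add_mul,
          Matrix.mul_one, Matrix.mul_assoc]
        abel
    _ = Lᵀ⁻¹ * Lᵀ := by
        rw [hdiag, sub_self, Matrix.mul_zero, Matrix.zero_mul, add_zero, Matrix.mul_one]
    _ = 1 := Matrix.nonsing_inv_mul _ hLT
end

section
/- With the hypotheses of the exact low-rank factorization LᵀH_mis L = VΛVᵀ (VᵀV = I_r, λ_i > -1), the matrix S := L(V P Vᵀ + I), where P = diag(1/√(λ₁+1) − 1, …, 1/√(λ_r+1) − 1), satisfies S Sᵀ = H⁻¹ with H = H_mis + (LLᵀ)⁻¹. That is, S is a square root factor of the approximate posterior covariance. -/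
open Matrix

/-- Square root factor of the approximate posterior covariance: with the exact low-rank
factorization `LᵀH_mis L = VΛVᵀ` (`VᵀV = I`, `λᵢ > -1`), the matrix
`S = L(V P Vᵀ + I)` with `P = diag(1/√(λᵢ+1) - 1)` satisfies `S Sᵀ = H⁻¹` where
`H = H_mis + (LLᵀ)⁻¹`. -/
theorem lowrank_sqrt {n r : ℕ} (Hmis L : Matrix (Fin n) (Fin n) ℝ)
    (V : Matrix (Fin n) (Fin r) ℝ) (lam : Fin r → ℝ)
    (hH : Hmis.PosSemidef) (hL : IsUnit L.det)
    (hV : Vᵀ * V = 1) (hlam : ∀ i, -1 < lam i)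
    (hfact : Lᵀ * Hmis * L = V * Matrix.diagonal lam * Vᵀ) :
    (L * (V * Matrix.diagonal (fun i => 1 / Real.sqrt (lam i + 1) - 1) * Vᵀ + 1)) *
        (L * (V * Matrix.diagonal (fun i => 1 / Real.sqrt (lam i + 1) - 1) * Vᵀ + 1))ᵀ =
      (Hmis + (L * Lᵀ)⁻¹)⁻¹ := by
  have hLT : IsUnit Lᵀ.det := by rwa [Matrix.det_transpose]
  set p : Fin r → ℝ := fun i => 1 / Real.sqrt (lam i + 1) - 1 with hp
  set P : Matrix (Fin r) (Fin r) ℝ := Matrix.diagonal p with hPdef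
  set M : Matrix (Fin n) (Fin n) ℝ := V * P * Vᵀ + 1 with hM
  set H : Matrix (Fin n) (Fin n) ℝ := Hmis + (L * Lᵀ)⁻¹ with hHdef
  have hPT : Pᵀ = P := by rw [hPdef, Matrix.diagonal_transpose]
  have hMT : Mᵀ = M := by
    rw [hM, Matrix.transpose_add, Matrix.transpose_one, Matrix.transpose_mul,
      Matrix.transpose_mul, hPT, Matrix.transpose_transpose, Matrix.mul_assoc]
  -- Lᵀ H L = V Λ Vᵀ + 1
  have hA : Lᵀ * H * L = V * Matrix.diagonal lam * Vᵀ + 1 := by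
    have h1 : Lᵀ * (L * Lᵀ)⁻¹ * L = 1 := by
      rw [Matrix.mul_inv_rev, ← Matrix.mul_assoc, Matrix.mul_nonsing_inv Lᵀ hLT,
        Matrix.one_mul, Matrix.nonsing_inv_mul L hL]
    rw [hHdef, Matrix.mul_add, Matrix.add_mul, hfact, h1]
  -- entrywise identity
  have hd : ∀ i, (p i * p i + 2 * p i) * lam i + (p i * p i + 2 * p i) + lam i = 0 := by
    intro i
    have ht : (0:ℝ) < lam i + 1 := by linarith [hlam i]
    have hs : Real.sqrt (lam i + 1) ≠ 0 := ne_of_gt (Real.sqrt_pos.mpr ht)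
    have hms : Real.sqrt (lam i + 1) * Real.sqrt (lam i + 1) = lam i + 1 :=
      Real.mul_self_sqrt ht.le
    have hpp : (p i + 1) * (p i + 1) = 1 / (lam i + 1) := by
      simp only [hp]
      rw [sub_add_cancel, div_mul_div_comm, one_mul, hms]
    have h6 : p i * p i + 2 * p i = 1 / (lam i + 1) - 1 := by nlinarith [hpp]
    rw [h6]
    field_simp
    ring
  have h3' : P * P + P + P = Matrix.diagonal (fun i => p i * p i + 2 * p i) := by
    rw [hPdef, Matrix.diagonal_mul_diagonal, Matrix.diagonal_add, Matrix.diagonal_add]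
    exact congrArg Matrix.diagonal (funext fun i => by ring)
  have h2 : V * P * Vᵀ * (V * P * Vᵀ) = V * (P * P) * Vᵀ := by
    rw [show V * P * Vᵀ * (V * P * Vᵀ) = V * P * (Vᵀ * V) * P * Vᵀ by
      simp [Matrix.mul_assoc], hV]
    simp [Matrix.mul_assoc]
  have hD : M * M = V * Matrix.diagonal (fun i => p i * p i + 2 * p i) * Vᵀ + 1 := by
    calc M * M = (V * P * Vᵀ) * (V * P * Vᵀ) + V * P * Vᵀ + V * P * Vᵀ + 1 := by
          rw [hM]
          simp only [Matrix.add_mul, Matrix.mul_add, Matrix.mul_one, Matrix.one_mul]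
          abel
      _ = V * (P * P) * Vᵀ + V * P * Vᵀ + V * P * Vᵀ + 1 := by rw [h2]
      _ = V * (P * P + P + P) * Vᵀ + 1 := by
          simp only [Matrix.mul_add, Matrix.add_mul]
      _ = V * Matrix.diagonal (fun i => p i * p i + 2 * p i) * Vᵀ + 1 := by rw [h3']
  have h4 : Matrix.diagonal (fun i => p i * p i + 2 * p i) * Matrix.diagonal lam =
      Matrix.diagonal (fun i => (p i * p i + 2 * p i) * lam i) := by
    rw [Matrix.diagonal_mul_diagonal]
  have h5 : Matrix.diagonal (fun i => (p i * p i + 2 * p i) * lam i) +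
      Matrix.diagonal (fun i => p i * p i + 2 * p i) + Matrix.diagonal lam =
      (0 : Matrix (Fin r) (Fin r) ℝ) := by
    rw [Matrix.diagonal_add, Matrix.diagonal_add]
    have : (fun i => (p i * p i + 2 * p i) * lam i + (p i * p i + 2 * p i) + lam i) =
        (fun _ : Fin r => (0:ℝ)) := funext hd
    simp only [this, Matrix.diagonal_zero]
  have hMM : M * M * (V * Matrix.diagonal lam * Vᵀ + 1) = 1 := by
    rw [hD]
    set D : Matrix (Fin r) (Fin r) ℝ :=
      Matrix.diagonal (fun i => p i * p i + 2 * p i) with hDdef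
    have hVD : V * D * Vᵀ * (V * Matrix.diagonal lam * Vᵀ) =
        V * (Matrix.diagonal (fun i => (p i * p i + 2 * p i) * lam i)) * Vᵀ := by
      rw [show V * D * Vᵀ * (V * Matrix.diagonal lam * Vᵀ) =
          V * (D * (Vᵀ * V) * Matrix.diagonal lam) * Vᵀ by simp [Matrix.mul_assoc], hV]
      rw [Matrix.mul_one, hDdef, h4]
    calc (V * D * Vᵀ + 1) * (V * Matrix.diagonal lam * Vᵀ + 1)
        = V * D * Vᵀ * (V * Matrix.diagonal lam * Vᵀ) + V * D * Vᵀ +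
          V * Matrix.diagonal lam * Vᵀ + 1 := by
          simp only [Matrix.add_mul, Matrix.mul_add, Matrix.mul_one, Matrix.one_mul]
          abel
      _ = V * (Matrix.diagonal (fun i => (p i * p i + 2 * p i) * lam i) + D +
            Matrix.diagonal lam) * Vᵀ + 1 := by
          rw [hVD]
          simp only [Matrix.mul_add, Matrix.add_mul]
      _ = 1 := by rw [hDdef, h5]; simp
  -- main computation
  have hkey : (L * M) * (L * M)ᵀ * H = 1 := by
    have hLH : Lᵀ * H = (V * Matrix.diagonal lam * Vᵀ + 1) * L⁻¹ := by
      have := congrArg (fun X => X * L⁻¹) hA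
      simpa [Matrix.mul_assoc, Matrix.mul_nonsing_inv L hL] using this
    calc (L * M) * (L * M)ᵀ * H = L * (M * M) * (Lᵀ * H) := by
          rw [Matrix.transpose_mul, hMT]; simp [Matrix.mul_assoc]
      _ = L * (M * M * (V * Matrix.diagonal lam * Vᵀ + 1)) * L⁻¹ := by
          rw [hLH]; simp [Matrix.mul_assoc]
      _ = 1 := by rw [hMM, Matrix.mul_one, Matrix.mul_nonsing_inv L hL]
  exact (Matrix.inv_eq_left_inv hkey).symm
end
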